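/- Let OPT ⊆ P be a well-separated set with |OPT| = k whose unit balls cover at least r red and at least b blue points, let c_1, c_2, c_3 ∈ OPT be distinct, let q_i ∈ 𝓑(c_i) for i = 1, 2, 3, define P_1 = P and P_{i+1} = P_i ∖ 𝓕(q_i) for i = 1, 2, 3, let Guess = 𝓑(c_1) ∪ 𝓑(c_2) ∪ 𝓑(c_3), and let τ ∈ ℕ satisfy τ ≤ |Gain(c_i, q_i) ∩ P_i| for each i = 1, 2, 3. Then: (1) for every p ∈ OPT ∖ {c_1, c_2, c_3}, 𝓑(p) ⊆ P_4, and the union ∪_{p ∈ OPT ∖ {c_1,c_2,c_3}} 𝓑(p) contains at least b − |B ∩ Guess| blue points and at least r − |R ∩ Guess| red points; and (2) the three flowers 𝓕(q_1), 𝓕(q_2), 𝓕(q_3) are contained in P ∖ P_4 and their union contains at least |B ∩ Guess| blue points and at least |R ∩ Guess| + 3τ red points. -/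

import Mathlib

open scoped Classical

/-- The ball of radius `ρ` around `j` in a finite metric space. -/
noncomputable def bal {P : Type*} [Fintype P] [MetricSpace P] (j : P) (ρ : ℝ) : Finset P :=
  Finset.univ.filter fun i => dist i j ≤ ρ

/-- The flower centered at `j`. -/
noncomputable def flower {P : Type*} [Fintype P] [MetricSpace P] (j : P) : Finset P :=
  (bal j 1).biUnion fun i => bal i 1

/-- `Gain(p, q)`: the set of red points added to `𝓑(p)` by forming a flower centered at `q`. -/
noncomputable def gain {P : Type*} [Fintype P] [MetricSpace P] (R : Finset P) (p q : P) :
    Finset P :=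
  R ∩ (flower q \ bal p 1)

/-- A set `OPT` is well-separated if no ball of radius three covers two unit balls centered
at distinct points of `OPT`. -/
def WellSeparated {P : Type*} [Fintype P] [MetricSpace P] (OPT : Finset P) : Prop :=
  ¬ ∃ (q : P) (c c' : P), c ∈ OPT ∧ c' ∈ OPT ∧ c ≠ c' ∧ bal c 1 ∪ bal c' 1 ⊆ bal q 3

/-! A unit ball of `OPT` and a flower around a point of another unit ball of `OPT` are disjoint,
since otherwise both balls would lie in a ball of radius three around a common petal centre.
Hence the unguessed optimal balls survive the removal of the three flowers, which cover the
guessed balls, and each gain lies outside the guessed balls and outside the flowers removed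
before it. The guessed red points and the three gains are therefore pairwise disjoint red
points of the three flowers. -/

open Finset

section Flowers

variable {P : Type*} [Fintype P] [MetricSpace P]

@[simp]
lemma mem_bal {i j : P} {ρ : ℝ} : i ∈ bal j ρ ↔ dist i j ≤ ρ := by
  simp [bal]

@[simp]
lemma mem_flower {x j : P} : x ∈ flower j ↔ ∃ m, dist m j ≤ 1 ∧ dist x m ≤ 1 := by
  simp [flower]

lemma bal_subset_flower {c q : P} (hq : q ∈ bal c 1) : bal c 1 ⊆ flower q := fun y hy =>
  mem_flower.2 ⟨c, by rw [dist_comm]; exact mem_bal.1 hq, mem_bal.1 hy⟩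

lemma bal_one_subset_bal_three {a m : P} (h : dist a m ≤ 2) : bal a 1 ⊆ bal m 3 := by
  intro y hy
  rw [mem_bal] at hy ⊢
  linarith [dist_triangle y a m]

lemma WellSeparated.disjoint_bal_flower {OPT : Finset P} (hsep : WellSeparated OPT)
    {p c q : P} (hp : p ∈ OPT) (hc : c ∈ OPT) (hne : p ≠ c) (hq : q ∈ bal c 1) :
    Disjoint (bal p 1) (flower q) := by
  refine disjoint_left.2 fun x hxp hxf => hsep ?_
  obtain ⟨m, hmq, hxm⟩ := mem_flower.1 hxf
  rw [mem_bal] at hxp hq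
  have hpm : dist p m ≤ 2 := by linarith [dist_triangle p x m, dist_comm p x]
  have hcm : dist c m ≤ 2 := by linarith [dist_triangle c q m, dist_comm c q, dist_comm q m]
  exact ⟨m, p, c, hp, hc, hne,
    union_subset (bal_one_subset_bal_three hpm) (bal_one_subset_bal_three hcm)⟩

lemma WellSeparated.disjoint_gain_bal {OPT : Finset P} (hsep : WellSeparated OPT) (R : Finset P)
    {c c' q : P} (hc : c ∈ OPT) (hc' : c' ∈ OPT) (hq : q ∈ bal c 1) :
    Disjoint (gain R c q) (bal c' 1) := by
  rcases eq_or_ne c' c with rfl | hne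
  · exact sdiff_disjoint.mono_left inter_subset_right
  · exact (hsep.disjoint_bal_flower hc' hc hne hq).symm.mono_left
      (inter_subset_right.trans sdiff_subset)

lemma card_inter_add_card_gain_le (R : Finset P) {c q : P} {X Y : Finset P}
    (hY : Disjoint (gain R c q) Y) :
    (R ∩ (Y ∪ X)).card + (gain R c q ∩ (univ \ X)).card ≤ (R ∩ (Y ∪ X ∪ flower q)).card := by
  have hdisj : Disjoint (R ∩ (Y ∪ X)) (gain R c q ∩ (univ \ X)) :=
    (disjoint_union_right.2 ⟨hY.mono_left inter_subset_left,
      sdiff_disjoint.mono_left inter_subset_right⟩).symm.mono_left inter_subset_right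
  have hgain : gain R c q ∩ (univ \ X) ⊆ R ∩ (Y ∪ X ∪ flower q) := fun x hx => by
    simp only [gain, mem_inter, mem_sdiff] at hx
    simp [hx.1.1, hx.1.2.1]
  rw [← card_union_of_disjoint hdisj]
  exact card_le_card (union_subset
    (inter_subset_inter_left subset_union_left) hgain)

lemma bal_union_subset_flower_union {c₁ c₂ c₃ q₁ q₂ q₃ : P} (hq₁ : q₁ ∈ bal c₁ 1)
    (hq₂ : q₂ ∈ bal c₂ 1) (hq₃ : q₃ ∈ bal c₃ 1) :
    bal c₁ 1 ∪ bal c₂ 1 ∪ bal c₃ 1 ⊆ flower q₁ ∪ flower q₂ ∪ flower q₃ :=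
  union_subset_union (union_subset_union (bal_subset_flower hq₁) (bal_subset_flower hq₂))
    (bal_subset_flower hq₃)

lemma WellSeparated.card_inter_bal_union_add_three_mul_le {OPT : Finset P}
    (hsep : WellSeparated OPT) (R : Finset P) {c₁ c₂ c₃ q₁ q₂ q₃ : P}
    (hc₁ : c₁ ∈ OPT) (hc₂ : c₂ ∈ OPT) (hc₃ : c₃ ∈ OPT)
    (hq₁ : q₁ ∈ bal c₁ 1) (hq₂ : q₂ ∈ bal c₂ 1) (hq₃ : q₃ ∈ bal c₃ 1) {τ : ℕ}
    (hτ₁ : τ ≤ (gain R c₁ q₁ ∩ univ).card)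
    (hτ₂ : τ ≤ (gain R c₂ q₂ ∩ (univ \ flower q₁)).card)
    (hτ₃ : τ ≤ (gain R c₃ q₃ ∩ (univ \ (flower q₁ ∪ flower q₂))).card) :
    (R ∩ (bal c₁ 1 ∪ bal c₂ 1 ∪ bal c₃ 1)).card + 3 * τ ≤
      (R ∩ (flower q₁ ∪ flower q₂ ∪ flower q₃)).card := by
  have hgain {c q : P} (hc : c ∈ OPT) (hq : q ∈ bal c 1) :
      Disjoint (gain R c q) (bal c₁ 1 ∪ bal c₂ 1 ∪ bal c₃ 1) :=
    disjoint_union_right.2 ⟨disjoint_union_right.2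
      ⟨hsep.disjoint_gain_bal R hc hc₁ hq, hsep.disjoint_gain_bal R hc hc₂ hq⟩,
      hsep.disjoint_gain_bal R hc hc₃ hq⟩
  have hround₁ := card_inter_add_card_gain_le R (X := ∅) (hgain hc₁ hq₁)
  have hround₂ := card_inter_add_card_gain_le R (X := flower q₁) (hgain hc₂ hq₂)
  have hround₃ := card_inter_add_card_gain_le R (X := flower q₁ ∪ flower q₂) (hgain hc₃ hq₃)
  have hcover := union_eq_right.2 (bal_union_subset_flower_union hq₁ hq₂ hq₃)
  simp only [union_assoc] at hcover ⊢
  simp only [union_empty, sdiff_empty, union_assoc, hcover] at hround₁ hround₂ hround₃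
  omega

end Flowers

lemma card_inter_biUnion_le_add {α ι : Type*} [DecidableEq α] [DecidableEq ι]
    (S : Finset α) (f : ι → Finset α) (OPT T : Finset ι) :
    (S ∩ OPT.biUnion f).card ≤ (S ∩ T.biUnion f).card + (S ∩ (OPT \ T).biUnion f).card := by
  calc (S ∩ OPT.biUnion f).card ≤ (S ∩ (T.biUnion f ∪ (OPT \ T).biUnion f)).card := by
        refine card_le_card (inter_subset_inter_left ?_)
        rw [← union_biUnion]
        exact biUnion_subset_biUnion_of_subset_left f (by simp)
    _ ≤ _ := by
        rw [inter_union_distrib_left]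
        exact card_union_le _ _

theorem stmt5_general {P : Type*} [Fintype P] [MetricSpace P]
    (R B : Finset P)
    (r b : ℕ)
    (OPT : Finset P) (hsep : WellSeparated OPT)
    (hcovR : r ≤ (R ∩ OPT.biUnion fun p => bal p 1).card)
    (hcovB : b ≤ (B ∩ OPT.biUnion fun p => bal p 1).card)
    (c₁ c₂ c₃ : P) (hc₁ : c₁ ∈ OPT) (hc₂ : c₂ ∈ OPT) (hc₃ : c₃ ∈ OPT)
    (q₁ q₂ q₃ : P) (hq₁ : q₁ ∈ bal c₁ 1) (hq₂ : q₂ ∈ bal c₂ 1) (hq₃ : q₃ ∈ bal c₃ 1)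
    (P₁ P₂ P₃ P₄ : Finset P)
    (hP₁ : P₁ = Finset.univ)
    (hP₂ : P₂ = P₁ \ flower q₁)
    (hP₃ : P₃ = P₂ \ flower q₂)
    (hP₄ : P₄ = P₃ \ flower q₃)
    (Guess : Finset P) (hGuess : Guess = bal c₁ 1 ∪ bal c₂ 1 ∪ bal c₃ 1)
    (τ : ℕ)
    (hτ₁ : τ ≤ (gain R c₁ q₁ ∩ P₁).card)
    (hτ₂ : τ ≤ (gain R c₂ q₂ ∩ P₂).card)
    (hτ₃ : τ ≤ (gain R c₃ q₃ ∩ P₃).card) :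
    ((∀ p ∈ OPT \ {c₁, c₂, c₃}, bal p 1 ⊆ P₄) ∧
      (b : ℤ) - ((B ∩ Guess).card : ℤ) ≤
        ((B ∩ (OPT \ {c₁, c₂, c₃}).biUnion fun p => bal p 1).card : ℤ) ∧
      (r : ℤ) - ((R ∩ Guess).card : ℤ) ≤
        ((R ∩ (OPT \ {c₁, c₂, c₃}).biUnion fun p => bal p 1).card : ℤ)) ∧
    ((flower q₁ ⊆ Finset.univ \ P₄ ∧ flower q₂ ⊆ Finset.univ \ P₄ ∧
        flower q₃ ⊆ Finset.univ \ P₄) ∧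
      (B ∩ Guess).card ≤ (B ∩ (flower q₁ ∪ flower q₂ ∪ flower q₃)).card ∧
      (R ∩ Guess).card + 3 * τ ≤ (R ∩ (flower q₁ ∪ flower q₂ ∪ flower q₃)).card) := by
  subst hP₁ hP₂ hP₃ hP₄ hGuess
  simp only [sdiff_sdiff_left, sup_eq_union] at hτ₃ ⊢
  have hcovered (S : Finset P) := card_inter_biUnion_le_add S (bal · 1) OPT {c₁, c₂, c₃}
  simp only [biUnion_insert, singleton_biUnion, ← union_assoc] at hcovered
  have hB := hcovered B
  have hR := hcovered R
  refine ⟨⟨fun p hp => ?_, by omega, by omega⟩, ⟨?_, ?_, ?_⟩,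
    card_le_card (inter_subset_inter_left (bal_union_subset_flower_union hq₁ hq₂ hq₃)),
    hsep.card_inter_bal_union_add_three_mul_le R hc₁ hc₂ hc₃ hq₁ hq₂ hq₃ hτ₁ hτ₂ hτ₃⟩
  · simp only [mem_sdiff, mem_insert, mem_singleton, not_or] at hp
    obtain ⟨hp, hp₁, hp₂, hp₃⟩ := hp
    exact subset_sdiff.2 ⟨subset_univ _, disjoint_union_right.2 ⟨disjoint_union_right.2
      ⟨hsep.disjoint_bal_flower hp hc₁ hp₁ hq₁, hsep.disjoint_bal_flower hp hc₂ hp₂ hq₂⟩,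
      hsep.disjoint_bal_flower hp hc₃ hp₃ hq₃⟩⟩
  all_goals intro x hx; simp [hx]

/-- the properties guaranteed by Phase I of the algorithm. -/
theorem stmt5 {P : Type*} [Fintype P] [MetricSpace P]
    (R B : Finset P) (hpart : ∀ p : P, (p ∈ R ∧ p ∉ B) ∨ (p ∈ B ∧ p ∉ R))
    (k r b : ℕ)
    (OPT : Finset P) (hsep : WellSeparated OPT) (hcard : OPT.card = k)
    (hcovR : r ≤ (R ∩ OPT.biUnion fun p => bal p 1).card)
    (hcovB : b ≤ (B ∩ OPT.biUnion fun p => bal p 1).card)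
    (c₁ c₂ c₃ : P) (hc₁ : c₁ ∈ OPT) (hc₂ : c₂ ∈ OPT) (hc₃ : c₃ ∈ OPT)
    (h12 : c₁ ≠ c₂) (h13 : c₁ ≠ c₃) (h23 : c₂ ≠ c₃)
    (q₁ q₂ q₃ : P) (hq₁ : q₁ ∈ bal c₁ 1) (hq₂ : q₂ ∈ bal c₂ 1) (hq₃ : q₃ ∈ bal c₃ 1)
    (P₁ P₂ P₃ P₄ : Finset P)
    (hP₁ : P₁ = Finset.univ)
    (hP₂ : P₂ = P₁ \ flower q₁)
    (hP₃ : P₃ = P₂ \ flower q₂)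
    (hP₄ : P₄ = P₃ \ flower q₃)
    (Guess : Finset P) (hGuess : Guess = bal c₁ 1 ∪ bal c₂ 1 ∪ bal c₃ 1)
    (τ : ℕ)
    (hτ₁ : τ ≤ (gain R c₁ q₁ ∩ P₁).card)
    (hτ₂ : τ ≤ (gain R c₂ q₂ ∩ P₂).card)
    (hτ₃ : τ ≤ (gain R c₃ q₃ ∩ P₃).card) :
    ((∀ p ∈ OPT \ {c₁, c₂, c₃}, bal p 1 ⊆ P₄) ∧
      (b : ℤ) - ((B ∩ Guess).card : ℤ) ≤
        ((B ∩ (OPT \ {c₁, c₂, c₃}).biUnion fun p => bal p 1).card : ℤ) ∧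
      (r : ℤ) - ((R ∩ Guess).card : ℤ) ≤
        ((R ∩ (OPT \ {c₁, c₂, c₃}).biUnion fun p => bal p 1).card : ℤ)) ∧
    ((flower q₁ ⊆ Finset.univ \ P₄ ∧ flower q₂ ⊆ Finset.univ \ P₄ ∧
        flower q₃ ⊆ Finset.univ \ P₄) ∧
      (B ∩ Guess).card ≤ (B ∩ (flower q₁ ∪ flower q₂ ∪ flower q₃)).card ∧
      (R ∩ Guess).card + 3 * τ ≤ (R ∩ (flower q₁ ∪ flower q₂ ∪ flower q₃)).card) :=
  stmt5_general R B r b OPT hsep hcovR hcovB c₁ c₂ c₃ hc₁ hc₂ hc₃ q₁ q₂ q₃ hq₁ hq₂ hq₃ P₁ P₂ P₃ P₄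
    hP₁ hP₂ hP₃ hP₄ Guess hGuess τ hτ₁ hτ₂ hτ₃
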